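/- Let F be an algebraically closed field and α₁, α₂, β₁, β₂ ∈ F. In the split octonion algebra O over F, there exists an F-algebra automorphism g of O with g(α₁·1 + β₁·u₁) = α₂·1 + β₂·u₁ if and only if α₁ = α₂ and either β₁ = β₂ = 0 or both β₁ and β₂ are nonzero. -/

import Mathlib

noncomputable section

/-- The split octonion algebra over `F`, given by Zorn vector matrices
`(x1, u; v, x2)` with `x1, x2 ∈ F` and `u, v ∈ F³`. -/
@[ext]
structure SplitOctonion (F : Type*) where
  x1 : F
  u : Fin 3 → F
  v : Fin 3 → F
  x2 : F

namespace SplitOctonion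

variable {F : Type*} [Field F]

/-- Dot product on `F³`. -/
def dot (x y : Fin 3 → F) : F := x 0 * y 0 + x 1 * y 1 + x 2 * y 2

/-- Cross product on `F³`. -/
def cross (x y : Fin 3 → F) : Fin 3 → F :=
  ![x 1 * y 2 - x 2 * y 1, x 2 * y 0 - x 0 * y 2, x 0 * y 1 - x 1 * y 0]

instance : Zero (SplitOctonion F) := ⟨⟨0, 0, 0, 0⟩⟩
instance : One (SplitOctonion F) := ⟨⟨1, 0, 0, 1⟩⟩
instance : Add (SplitOctonion F) :=
  ⟨fun x y => ⟨x.x1 + y.x1, x.u + y.u, x.v + y.v, x.x2 + y.x2⟩⟩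
instance : Neg (SplitOctonion F) := ⟨fun x => ⟨-x.x1, -x.u, -x.v, -x.x2⟩⟩
instance : SMul F (SplitOctonion F) :=
  ⟨fun c x => ⟨c * x.x1, c • x.u, c • x.v, c * x.x2⟩⟩

/-- Zorn vector matrix multiplication. -/
instance : Mul (SplitOctonion F) :=
  ⟨fun x y => ⟨x.x1 * y.x1 + dot x.u y.v,
    x.x1 • y.u + y.x2 • x.u - cross x.v y.v,
    y.x1 • x.v + x.x2 • y.v + cross x.u y.u,
    x.x2 * y.x2 + dot x.v y.u⟩⟩

@[simp] lemma zero_x1 : (0 : SplitOctonion F).x1 = 0 := rfl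
@[simp] lemma zero_u : (0 : SplitOctonion F).u = 0 := rfl
@[simp] lemma zero_v : (0 : SplitOctonion F).v = 0 := rfl
@[simp] lemma zero_x2 : (0 : SplitOctonion F).x2 = 0 := rfl
@[simp] lemma add_x1 (x y : SplitOctonion F) : (x + y).x1 = x.x1 + y.x1 := rfl
@[simp] lemma add_u (x y : SplitOctonion F) : (x + y).u = x.u + y.u := rfl
@[simp] lemma add_v (x y : SplitOctonion F) : (x + y).v = x.v + y.v := rfl
@[simp] lemma add_x2 (x y : SplitOctonion F) : (x + y).x2 = x.x2 + y.x2 := rfl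
@[simp] lemma neg_x1 (x : SplitOctonion F) : (-x).x1 = -x.x1 := rfl
@[simp] lemma neg_u (x : SplitOctonion F) : (-x).u = -x.u := rfl
@[simp] lemma neg_v (x : SplitOctonion F) : (-x).v = -x.v := rfl
@[simp] lemma neg_x2 (x : SplitOctonion F) : (-x).x2 = -x.x2 := rfl
@[simp] lemma smul_x1 (c : F) (x : SplitOctonion F) : (c • x).x1 = c * x.x1 := rfl
@[simp] lemma smul_u (c : F) (x : SplitOctonion F) : (c • x).u = c • x.u := rfl
@[simp] lemma smul_v (c : F) (x : SplitOctonion F) : (c • x).v = c • x.v := rfl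
@[simp] lemma smul_x2 (c : F) (x : SplitOctonion F) : (c • x).x2 = c * x.x2 := rfl

instance : AddCommGroup (SplitOctonion F) where
  add_assoc x y z := by ext <;> simp [add_assoc]
  zero_add x := by ext <;> simp
  add_zero x := by ext <;> simp
  add_comm x y := by ext <;> simp [add_comm]
  neg_add_cancel x := by ext <;> simp
  nsmul := nsmulRec
  zsmul := zsmulRec

instance : Module F (SplitOctonion F) where
  one_smul x := by ext <;> simp
  mul_smul c d x := by ext <;> simp [mul_assoc, mul_smul]
  smul_zero c := by ext <;> simp
  smul_add c x y := by ext <;> simp [mul_add, smul_add]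
  add_smul c d x := by ext <;> simp [add_mul, add_smul]
  zero_smul x := by ext <;> simp

/-- Powers of a single octonion (well defined by power-associativity). -/
def npow (x : SplitOctonion F) : ℕ → SplitOctonion F
  | 0 => 1
  | n + 1 => npow x n * x

instance : Pow (SplitOctonion F) ℕ := ⟨npow⟩

/-- Substitution of an octonion into a polynomial over `F`:
`f(x) = αₙ xⁿ + ⋯ + α₁ x + α₀ • 1`. -/
def peval (f : Polynomial F) (x : SplitOctonion F) : SplitOctonion F :=
  f.sum fun i c => c • x ^ i

/-- The octonion `e₁`. -/
def e1 : SplitOctonion F := ⟨1, 0, 0, 0⟩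
/-- The octonion `e₂`. -/
def e2 : SplitOctonion F := ⟨0, 0, 0, 1⟩
/-- The octonion `u₁`. -/
def u1 : SplitOctonion F := ⟨0, ![1, 0, 0], 0, 0⟩

/-- Conjugation on `O`. -/
def conj (x : SplitOctonion F) : SplitOctonion F := ⟨x.x2, -x.u, -x.v, x.x1⟩

/-- The norm of an octonion. -/
def normO (x : SplitOctonion F) : F := x.x1 * x.x2 - dot x.u x.v

/-- The trace of an octonion. -/
def trO (x : SplitOctonion F) : F := x.x1 + x.x2

/-- `g` is an `F`-algebra automorphism of `O`: a linear bijection preserving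
multiplication (and the unit). -/
def IsAlgAut (g : SplitOctonion F ≃ₗ[F] SplitOctonion F) : Prop :=
  g 1 = 1 ∧ ∀ x y, g (x * y) = g x * g y

end SplitOctonion

/-! Automorphisms fix the scalars, so an automorphism carrying `α₁ + β₁u₁` to `α₂ + β₂u₁` carries
`β₁u₁` to `(α₂ - α₁) + β₂u₁`. Since `β₁u₁` squares to zero, so does its image, and the square of
`c + bu₁` has scalar part `c²`; hence `α₁ = α₂`, and `β₁u₁ ↦ β₂u₁` with `β₁ = 0 ↔ β₂ = 0` by
injectivity. Conversely, every diagonal `d ∈ SL₃(F)` acting by `u ↦ du`, `v ↦ d⁻¹v` is an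
automorphism, and `d = diag(β₂/β₁, β₁/β₂, 1)` scales `u₁` by `β₂/β₁`. -/

namespace SplitOctonion

variable {F : Type*} [Field F]

@[simp] lemma mul_x1 (x y : SplitOctonion F) :
    (x * y).x1 = x.x1 * y.x1 + dot x.u y.v := rfl
@[simp] lemma mul_u (x y : SplitOctonion F) :
    (x * y).u = x.x1 • y.u + y.x2 • x.u - cross x.v y.v := rfl
@[simp] lemma mul_v (x y : SplitOctonion F) :
    (x * y).v = y.x1 • x.v + x.x2 • y.v + cross x.u y.u := rfl
@[simp] lemma mul_x2 (x y : SplitOctonion F) :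
    (x * y).x2 = x.x2 * y.x2 + dot x.v y.u := rfl
@[simp] lemma one_x1 : (1 : SplitOctonion F).x1 = 1 := rfl
@[simp] lemma one_u : (1 : SplitOctonion F).u = 0 := rfl
@[simp] lemma one_v : (1 : SplitOctonion F).v = 0 := rfl
@[simp] lemma one_x2 : (1 : SplitOctonion F).x2 = 1 := rfl
@[simp] lemma u1_x1 : (u1 : SplitOctonion F).x1 = 0 := rfl
@[simp] lemma u1_u : (u1 : SplitOctonion F).u = ![1, 0, 0] := rfl
@[simp] lemma u1_v : (u1 : SplitOctonion F).v = 0 := rfl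
@[simp] lemma u1_x2 : (u1 : SplitOctonion F).x2 = 0 := rfl

lemma u1_ne_zero : (u1 : SplitOctonion F) ≠ 0 := fun h => by
  simpa using congrArg (fun x => x.u 0) h

lemma smul_one_add_smul_u1_mul_self (c b : F) :
    (c • 1 + b • u1 : SplitOctonion F) * (c • 1 + b • u1) = c ^ 2 • 1 + (2 * c * b) • u1 := by
  ext i
  · simp [dot]; ring
  · fin_cases i <;> simp [cross]; ring
  · fin_cases i <;> simp [cross]
  · simp [dot]; ring

lemma smul_u1_mul_smul_u1 (b b' : F) : (b • u1 : SplitOctonion F) * (b' • u1) = 0 := by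
  ext i <;> (try fin_cases i) <;> simp [dot, cross]

lemma IsAlgAut.map_smul_one {g : SplitOctonion F ≃ₗ[F] SplitOctonion F} (hg : IsAlgAut g)
    (c : F) : g (c • 1) = c • 1 := by
  rw [map_smul, hg.1]

section Torus

variable {d : Fin 3 → F}

lemma ne_zero_of_prod_eq_one (hd : d 0 * d 1 * d 2 = 1) (i : Fin 3) : d i ≠ 0 := by
  intro h
  fin_cases i <;> simp_all

lemma inv_prod_eq_one (hd : d 0 * d 1 * d 2 = 1) : d⁻¹ 0 * d⁻¹ 1 * d⁻¹ 2 = 1 := by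
  simp only [Pi.inv_apply, ← mul_inv, hd, inv_one]

lemma inv_eq_mul_of_prod_eq_one (hd : d 0 * d 1 * d 2 = 1) :
    (d 0)⁻¹ = d 1 * d 2 ∧ (d 1)⁻¹ = d 0 * d 2 ∧ (d 2)⁻¹ = d 0 * d 1 :=
  ⟨(eq_inv_of_mul_eq_one_left (by linear_combination hd)).symm,
    (eq_inv_of_mul_eq_one_left (by linear_combination hd)).symm,
    (eq_inv_of_mul_eq_one_left hd).symm⟩

lemma dot_mul_inv_mul (hd : d 0 * d 1 * d 2 = 1) (u v : Fin 3 → F) :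
    dot (d * u) (d⁻¹ * v) = dot u v := by
  obtain ⟨h0, h1, h2⟩ := inv_eq_mul_of_prod_eq_one hd
  simp only [dot, Pi.mul_apply, Pi.inv_apply, h0, h1, h2]
  linear_combination (u 0 * v 0 + u 1 * v 1 + u 2 * v 2) * hd

lemma cross_mul_mul (hd : d 0 * d 1 * d 2 = 1) (u u' : Fin 3 → F) :
    cross (d * u) (d * u') = d⁻¹ * cross u u' := by
  obtain ⟨h0, h1, h2⟩ := inv_eq_mul_of_prod_eq_one hd
  ext i
  fin_cases i <;> simp [cross, h0, h1, h2] <;> ring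

def torusAut (d : Fin 3 → F) (hd : d 0 * d 1 * d 2 = 1) :
    SplitOctonion F ≃ₗ[F] SplitOctonion F where
  toFun x := ⟨x.x1, d * x.u, d⁻¹ * x.v, x.x2⟩
  invFun x := ⟨x.x1, d⁻¹ * x.u, d * x.v, x.x2⟩
  left_inv x := by
    have := ne_zero_of_prod_eq_one hd
    ext i <;> simp [this]
  right_inv x := by
    have := ne_zero_of_prod_eq_one hd
    ext i <;> simp [this]
  map_add' x y := by ext <;> simp [mul_add]
  map_smul' c x := by ext <;> simp [mul_left_comm]

@[simp] lemma torusAut_apply (hd : d 0 * d 1 * d 2 = 1) (x : SplitOctonion F) :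
    torusAut d hd x = ⟨x.x1, d * x.u, d⁻¹ * x.v, x.x2⟩ := rfl

lemma torusAut_isAlgAut (hd : d 0 * d 1 * d 2 = 1) : IsAlgAut (torusAut d hd) := by
  refine ⟨by ext <;> simp, fun x y => ?_⟩
  have hd' := inv_prod_eq_one hd
  ext1
  · simp [dot_mul_inv_mul hd]
  · simp [cross_mul_mul hd', mul_sub, mul_add]
  · simp [cross_mul_mul hd, mul_add]
  · have hdot := dot_mul_inv_mul hd'
    simp only [inv_inv] at hdot
    simp [hdot]

lemma torusAut_u1 (hd : d 0 * d 1 * d 2 = 1) : torusAut d hd u1 = d 0 • u1 := by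
  ext i <;> (try fin_cases i) <;> simp

end Torus

lemma exists_isAlgAut_map_smul_u1 {b₁ b₂ : F} (hb₁ : b₁ ≠ 0) (hb₂ : b₂ ≠ 0) :
    ∃ g : SplitOctonion F ≃ₗ[F] SplitOctonion F, IsAlgAut g ∧ g (b₁ • u1) = b₂ • u1 := by
  have hd : ![b₂ / b₁, b₁ / b₂, 1] 0 * ![b₂ / b₁, b₁ / b₂, 1] 1 * ![b₂ / b₁, b₁ / b₂, 1] 2 = 1 :=
    by simp [hb₁, hb₂]
  refine ⟨torusAut _ hd, torusAut_isAlgAut hd, ?_⟩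
  rw [map_smul, torusAut_u1, smul_smul, Matrix.cons_val_zero, mul_div_cancel₀ _ hb₁]

end SplitOctonion

open SplitOctonion in
theorem aut_orbit_smul_one_add_smul_u1_iff_general {F : Type*} [Field F]
    (α₁ α₂ β₁ β₂ : F) :
    (∃ g : SplitOctonion F ≃ₗ[F] SplitOctonion F, IsAlgAut g ∧
        g (α₁ • (1 : SplitOctonion F) + β₁ • u1) = α₂ • (1 : SplitOctonion F) + β₂ • u1) ↔
      α₁ = α₂ ∧ ((β₁ = 0 ∧ β₂ = 0) ∨ (β₁ ≠ 0 ∧ β₂ ≠ 0)) := by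
  rw [← iff_iff_and_or_not_and_not]
  constructor
  · rintro ⟨g, hg, hgx⟩
    have hgu : g (β₁ • u1) = (α₂ - α₁) • 1 + β₂ • u1 := by
      rw [map_add, hg.map_smul_one] at hgx
      rw [sub_smul, sub_add_eq_add_sub, ← hgx, add_sub_cancel_left]
    have hα : α₂ - α₁ = 0 := by
      have hsq :
          ((α₂ - α₁) • 1 + β₂ • u1 : SplitOctonion F) * ((α₂ - α₁) • 1 + β₂ • u1) = 0 := by
        rw [← hgu, ← hg.2, smul_u1_mul_smul_u1, map_zero]
      simpa [smul_one_add_smul_u1_mul_self] using congrArg x1 hsq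
    rw [sub_eq_zero] at hα
    subst hα
    refine ⟨rfl, ?_⟩
    rw [sub_self, zero_smul, zero_add] at hgu
    rw [← smul_eq_zero_iff_left (u1_ne_zero (F := F)), ← g.map_eq_zero_iff, hgu,
      smul_eq_zero_iff_left (u1_ne_zero (F := F))]
  · rintro ⟨rfl, hβ⟩
    rcases eq_or_ne β₁ 0 with rfl | hβ₁
    · obtain rfl : β₂ = 0 := hβ.mp rfl
      exact ⟨LinearEquiv.refl F _, ⟨rfl, fun _ _ => rfl⟩, rfl⟩
    · obtain ⟨g, hg, hgu⟩ := exists_isAlgAut_map_smul_u1 hβ₁ (mt hβ.mpr hβ₁)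
      exact ⟨g, hg, by rw [map_add, hg.map_smul_one, hgu]⟩

open SplitOctonion in
/-- `α₁·1 + β₁·u₁` and `α₂·1 + β₂·u₁` are in the same
automorphism orbit iff `α₁ = α₂` and `β₁, β₂` are both zero or both nonzero. -/
theorem aut_orbit_smul_one_add_smul_u1_iff {F : Type*} [Field F] [IsAlgClosed F]
    (α₁ α₂ β₁ β₂ : F) :
    (∃ g : SplitOctonion F ≃ₗ[F] SplitOctonion F, IsAlgAut g ∧
        g (α₁ • (1 : SplitOctonion F) + β₁ • u1) = α₂ • (1 : SplitOctonion F) + β₂ • u1) ↔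
      α₁ = α₂ ∧ ((β₁ = 0 ∧ β₂ = 0) ∨ (β₁ ≠ 0 ∧ β₂ ≠ 0)) :=
  aut_orbit_smul_one_add_smul_u1_iff_general α₁ α₂ β₁ β₂
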